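/- arXiv:1811.10023 — 2 statements merged into one kernel-verified Lean document; each statement's English description precedes it below -/
import Mathlib

section
/- For every β ∈ (0,1), the derivative of ẽ(β) = K₁(β)/K₂(β) + 3/β is strictly negative. -/
open MeasureTheory Real Set

noncomputable def K0 (β : ℝ) : ℝ :=
  ∫ y in Set.Ioi (0:ℝ), (1 / Real.sqrt (1 + y^2)) * Real.exp (-β * Real.sqrt (1 + y^2))

noncomputable def K1 (β : ℝ) : ℝ :=
  ∫ y in Set.Ioi (0:ℝ), Real.exp (-β * Real.sqrt (1 + y^2))

noncomputable def K2 (β : ℝ) : ℝ :=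
  ∫ y in Set.Ioi (0:ℝ), ((2*y^2 + 1) / Real.sqrt (1 + y^2)) * Real.exp (-β * Real.sqrt (1 + y^2))

noncomputable def Mfun (β : ℝ) : ℝ :=
  ∫ q : EuclideanSpace ℝ (Fin 3), Real.exp (-β * Real.sqrt (1 + ‖q‖^2))

/-! With `E = √(1 + y²)`, differentiation under the integral sign gives
`K₁' = -∫ E e^{-βE}` and `K₂' = -∫ (2y² + 1) e^{-βE}`, while integration by parts against `y` and
`y E` gives `K₁ = β ∫ (y²/E) e^{-βE}` and `K₂ = β ∫ y² e^{-βE}`. Hence `K₁' = K₁/β - K₂` and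
`K₂' = -2K₂/β - K₁`, so `r = K₁/K₂` satisfies `ẽ' = 3r/β + r² - 1 - 3/β²`. As `(2y² + 1)/E ≥ 1`,
`0 < K₁ ≤ K₂`, so `r ∈ [0, 1]` and `ẽ' ≤ 3/β - 3/β² < 0` for `β < 1`. -/

open Filter Nat

noncomputable section

def energy (y : ℝ) : ℝ := √(1 + y ^ 2)

def boltzmannFactor (β y : ℝ) : ℝ := exp (-β * energy y)

def boltzmannIntegral (g : ℝ → ℝ) (β : ℝ) : ℝ := ∫ y in Ioi 0, g y * boltzmannFactor β y

end

lemma energy_pos (y : ℝ) : 0 < energy y := by unfold energy; positivity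

lemma sq_energy (y : ℝ) : energy y ^ 2 = 1 + y ^ 2 := sq_sqrt (by positivity)

lemma one_le_energy (y : ℝ) : 1 ≤ energy y := one_le_sqrt.2 (by nlinarith)

lemma abs_le_energy (y : ℝ) : |y| ≤ energy y := abs_le_sqrt (by linarith)

lemma continuous_energy : Continuous energy := by unfold energy; fun_prop

lemma Continuous.div_energy {f : ℝ → ℝ} (hf : Continuous f) :
    Continuous fun y => f y / energy y :=
  hf.div continuous_energy fun y => (energy_pos y).ne'

lemma hasDerivAt_energy (y : ℝ) : HasDerivAt energy (y / energy y) y := by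
  refine (((hasDerivAt_pow 2 y).const_add 1).sqrt (by positivity)).congr_deriv ?_
  have := (energy_pos y).ne'
  simp only [energy] at this ⊢
  field_simp
  norm_num

lemma boltzmannFactor_pos (β y : ℝ) : 0 < boltzmannFactor β y := exp_pos _

lemma continuous_boltzmannFactor (β : ℝ) : Continuous (boltzmannFactor β) :=
  continuous_exp.comp (continuous_const.mul continuous_energy)

lemma boltzmannFactor_le_exp {b : ℝ} (hb : 0 ≤ b) (y : ℝ) :
    boltzmannFactor b y ≤ exp (-b * y) := by
  have := (le_abs_self y).trans (abs_le_energy y)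
  exact exp_le_exp.2 (by nlinarith)

lemma boltzmannFactor_le_of_le {b b' : ℝ} (h : b ≤ b') (y : ℝ) :
    boltzmannFactor b' y ≤ boltzmannFactor b y :=
  exp_le_exp.2 (by nlinarith [energy_pos y])

lemma hasDerivAt_boltzmannFactor_left (β y : ℝ) :
    HasDerivAt (boltzmannFactor · y) (-energy y * boltzmannFactor β y) β := by
  refine ((hasDerivAt_neg β).mul_const (energy y)).exp.congr_deriv ?_
  rw [boltzmannFactor]; ring

lemma hasDerivAt_boltzmannFactor_right (β y : ℝ) :
    HasDerivAt (boltzmannFactor β) (-β * (y / energy y) * boltzmannFactor β y) y := by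
  refine ((hasDerivAt_energy y).const_mul (-β)).exp.congr_deriv ?_
  rw [boltzmannFactor]; ring

lemma energy_pow_mul_boltzmannFactor_le {b : ℝ} (hb : 0 < b) (n : ℕ) (y : ℝ) :
    energy y ^ n * boltzmannFactor b y ≤ n ! * (2 / b) ^ n * boltzmannFactor (b / 2) y := by
  have hE := pow_div_factorial_le_exp (x := b / 2 * energy y) (by positivity [energy_pos y]) n
  have : energy y ^ n = (2 / b) ^ n * (b / 2 * energy y) ^ n := by
    rw [← mul_pow]; field_simp
  calc energy y ^ n * boltzmannFactor b y
      = (2 / b) ^ n * n ! * ((b / 2 * energy y) ^ n / n !) * boltzmannFactor b y := by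
        rw [this]; field_simp
    _ ≤ (2 / b) ^ n * n ! * exp (b / 2 * energy y) * boltzmannFactor b y := by
        gcongr; exact (boltzmannFactor_pos b y).le
    _ = n ! * (2 / b) ^ n * boltzmannFactor (b / 2) y := by
        simp only [boltzmannFactor]; rw [mul_assoc _ (exp _), ← exp_add]; ring_nf

lemma integrableOn_boltzmannFactor {b : ℝ} (hb : 0 < b) :
    IntegrableOn (boltzmannFactor b) (Ioi 0) :=
  (exp_neg_integrableOn_Ioi 0 hb).mono' (continuous_boltzmannFactor b).aestronglyMeasurable
    (Eventually.of_forall fun y => by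
      rw [norm_of_nonneg (boltzmannFactor_pos b y).le]
      exact boltzmannFactor_le_exp hb.le y)

lemma integrableOn_mul_boltzmannFactor {g : ℝ → ℝ} {c b : ℝ} {n : ℕ} (hg : Continuous g)
    (hg_le : ∀ y, |g y| ≤ c * energy y ^ n) (hb : 0 < b) :
    IntegrableOn (fun y => g y * boltzmannFactor b y) (Ioi 0) := by
  refine ((integrableOn_boltzmannFactor (half_pos hb)).const_mul (c * (n ! * (2 / b) ^ n))).mono'
    (hg.mul (continuous_boltzmannFactor b)).aestronglyMeasurable
    (Eventually.of_forall fun y => ?_)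
  rw [norm_mul, norm_of_nonneg (boltzmannFactor_pos b y).le, norm_eq_abs]
  have hc : 0 ≤ c :=
    nonneg_of_mul_nonneg_left ((abs_nonneg _).trans (hg_le y)) (by positivity [energy_pos y])
  calc |g y| * boltzmannFactor b y ≤ c * (energy y ^ n * boltzmannFactor b y) := by
        rw [← mul_assoc]; gcongr; exacts [(boltzmannFactor_pos b y).le, hg_le y]
    _ ≤ c * (n ! * (2 / b) ^ n * boltzmannFactor (b / 2) y) :=
        mul_le_mul_of_nonneg_left (energy_pow_mul_boltzmannFactor_le hb n y) hc
    _ = _ := by ring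

lemma hasDerivAt_boltzmannIntegral {g : ℝ → ℝ} {c β : ℝ} {n : ℕ} (hg : Continuous g)
    (hg_le : ∀ y, |g y| ≤ c * energy y ^ n) (hβ : 0 < β) :
    HasDerivAt (boltzmannIntegral g) (boltzmannIntegral (fun y => -energy y * g y) β) β := by
  have hEg_le : ∀ y, |-energy y * g y| ≤ c * energy y ^ (n + 1) := fun y => by
    rw [abs_mul, abs_neg, abs_of_pos (energy_pos y), pow_succ]
    nlinarith [hg_le y, energy_pos y]
  have hEg : Continuous fun y => -energy y * g y := continuous_energy.neg.mul hg
  refine (hasDerivAt_integral_of_dominated_loc_of_deriv_le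
    (F := fun b y => g y * boltzmannFactor b y)
    (F' := fun b y => -energy y * g y * boltzmannFactor b y) (Ioi_mem_nhds (half_lt_self hβ))
    (Eventually.of_forall fun b => (hg.mul (continuous_boltzmannFactor b)).aestronglyMeasurable)
    (integrableOn_mul_boltzmannFactor hg hg_le hβ)
    (hEg.mul (continuous_boltzmannFactor β)).aestronglyMeasurable ?_
    (integrableOn_mul_boltzmannFactor hEg hEg_le (half_pos hβ)).norm
    (Eventually.of_forall fun y b _ => ?_)).2
  · refine Eventually.of_forall fun y b hb => ?_
    simp only [norm_mul, norm_of_nonneg (boltzmannFactor_pos _ y).le]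
    exact mul_le_mul_of_nonneg_left (boltzmannFactor_le_of_le (le_of_lt hb) y) (by positivity)
  · exact ((hasDerivAt_boltzmannFactor_left b y).const_mul (g y)).congr_deriv (by ring)

/-- The boundary term at `∞` vanishes because `u * boltzmannFactor β` and its derivative are both
integrable. -/
lemma boltzmannIntegral_eq_of_hasDerivAt {u u' : ℝ → ℝ} {c β : ℝ} {n : ℕ} (hβ : 0 < β)
    (hu : ∀ y, HasDerivAt u (u' y) y) (hu' : Continuous u') (hu0 : u 0 = 0)
    (hu_le : ∀ y, |u y| ≤ c * energy y ^ n) (hu'_le : ∀ y, |u' y| ≤ c * energy y ^ n) :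
    boltzmannIntegral u' β = β * boltzmannIntegral (fun y => u y * y / energy y) β := by
  have hu_cont : Continuous u := continuous_iff_continuousAt.2 fun y => (hu y).continuousAt
  have hv_le : ∀ y, |u y * y / energy y| ≤ c * energy y ^ n := fun y => by
    have : |y / energy y| ≤ 1 := by
      rw [abs_div, abs_of_pos (energy_pos y), div_le_one (energy_pos y)]; exact abs_le_energy y
    rw [mul_div_assoc, abs_mul]
    nlinarith [hu_le y, abs_nonneg (u y)]
  have hv_cont : Continuous fun y => u y * y / energy y :=
    (hu_cont.mul continuous_id).div continuous_energy fun y => (energy_pos y).ne'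
  have hu'w := integrableOn_mul_boltzmannFactor hu' hu'_le hβ
  have hvw := integrableOn_mul_boltzmannFactor hv_cont hv_le hβ
  have hderiv : ∀ y, HasDerivAt (fun y => u y * boltzmannFactor β y)
      (u' y * boltzmannFactor β y - β * (u y * y / energy y * boltzmannFactor β y)) y :=
    fun y => ((hu y).mul (hasDerivAt_boltzmannFactor_right β y)).congr_deriv (by ring)
  have hint := hu'w.sub (hvw.const_mul β)
  have hlim := tendsto_zero_of_hasDerivAt_of_integrableOn_Ioi (fun y _ => hderiv y) hint
    (integrableOn_mul_boltzmannFactor hu_cont hu_le hβ)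
  have key := integral_Ioi_of_hasDerivAt_of_tendsto' (fun y _ => hderiv y) hint hlim
  rw [integral_sub hu'w (hvw.const_mul β), integral_const_mul, hu0] at key
  unfold boltzmannIntegral
  linarith

lemma K1_eq_boltzmannIntegral : K1 = boltzmannIntegral 1 := by
  funext β; simp [K1, boltzmannIntegral, boltzmannFactor, energy]

lemma K2_eq_boltzmannIntegral :
    K2 = boltzmannIntegral fun y => (2 * y ^ 2 + 1) / energy y := rfl

lemma continuous_two_mul_sq_add_one_div_energy :
    Continuous fun y => (2 * y ^ 2 + 1) / energy y :=
  (by fun_prop : Continuous fun y : ℝ => 2 * y ^ 2 + 1).div_energy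

lemma abs_two_mul_sq_add_one_div_energy_le (y : ℝ) :
    |(2 * y ^ 2 + 1) / energy y| ≤ 2 * energy y ^ 2 := by
  rw [abs_of_nonneg (by positivity [energy_pos y]), sq_energy]
  calc (2 * y ^ 2 + 1) / energy y ≤ 2 * y ^ 2 + 1 := div_le_self (by positivity) (one_le_energy y)
    _ ≤ 2 * (1 + y ^ 2) := by linarith

lemma abs_sq_div_energy_le (y : ℝ) : |y ^ 2 / energy y| ≤ 1 * energy y ^ 2 := by
  rw [abs_of_nonneg (by positivity [energy_pos y]), sq_energy]
  calc y ^ 2 / energy y ≤ y ^ 2 := div_le_self (by positivity) (one_le_energy y)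
    _ ≤ 1 * (1 + y ^ 2) := by linarith

lemma K1_eq_mul {β : ℝ} (hβ : 0 < β) :
    K1 β = β * boltzmannIntegral (fun y => y ^ 2 / energy y) β := by
  have h := boltzmannIntegral_eq_of_hasDerivAt (u := id) (u' := 1) (c := 1) (n := 1) hβ
    hasDerivAt_id continuous_const rfl (fun y => by simpa using abs_le_energy y)
    (fun y => by simpa using one_le_energy y)
  rw [K1_eq_boltzmannIntegral, h]
  simp only [id, sq]

lemma K2_eq_mul {β : ℝ} (hβ : 0 < β) :
    K2 β = β * boltzmannIntegral (fun y => y ^ 2) β := by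
  have hderiv (y : ℝ) : HasDerivAt (fun y => y * energy y) ((2 * y ^ 2 + 1) / energy y) y := by
    refine ((hasDerivAt_id y).mul (hasDerivAt_energy y)).congr_deriv ?_
    simp only [id]
    field_simp [(energy_pos y).ne']
    linear_combination sq_energy y
  have hu_le (y : ℝ) : |y * energy y| ≤ 2 * energy y ^ 2 := by
    rw [abs_mul, abs_of_pos (energy_pos y)]
    nlinarith [abs_le_energy y, energy_pos y]
  rw [K2_eq_boltzmannIntegral, boltzmannIntegral_eq_of_hasDerivAt hβ hderiv
    continuous_two_mul_sq_add_one_div_energy (by simp) hu_le abs_two_mul_sq_add_one_div_energy_le]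
  congr 2
  funext y
  field_simp [(energy_pos y).ne']

lemma hasDerivAt_K1 {β : ℝ} (hβ : 0 < β) : HasDerivAt K1 (K1 β / β - K2 β) β := by
  have h := hasDerivAt_boltzmannIntegral (g := 1) (c := 1) (n := 0) continuous_const
    (by simp) hβ
  rw [← K1_eq_boltzmannIntegral] at h
  convert h using 1
  rw [K1_eq_mul hβ, mul_div_cancel_left₀ _ hβ.ne', K2_eq_boltzmannIntegral, boltzmannIntegral,
    boltzmannIntegral, boltzmannIntegral, ← integral_sub
    (integrableOn_mul_boltzmannFactor (continuous_pow 2).div_energy abs_sq_div_energy_le hβ)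
    (integrableOn_mul_boltzmannFactor continuous_two_mul_sq_add_one_div_energy
      abs_two_mul_sq_add_one_div_energy_le hβ)]
  refine setIntegral_congr_fun measurableSet_Ioi fun y _ => ?_
  simp only [Pi.one_apply]
  field_simp [(energy_pos y).ne']
  linear_combination boltzmannFactor β y * sq_energy y

lemma hasDerivAt_K2 {β : ℝ} (hβ : 0 < β) :
    HasDerivAt K2 (-(2 * (K2 β / β) + K1 β)) β := by
  have h := hasDerivAt_boltzmannIntegral continuous_two_mul_sq_add_one_div_energy
    abs_two_mul_sq_add_one_div_energy_le hβ
  rw [← K2_eq_boltzmannIntegral] at h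
  convert h using 1
  have hsq_le (y : ℝ) : |y ^ 2| ≤ 1 * energy y ^ 2 := by
    rw [abs_of_nonneg (sq_nonneg y), sq_energy]; linarith
  have hK1 : K1 β = ∫ y in Ioi 0, boltzmannFactor β y := rfl
  rw [K2_eq_mul hβ, mul_div_cancel_left₀ _ hβ.ne', hK1, boltzmannIntegral, boltzmannIntegral,
    ← integral_const_mul, ← integral_add
    ((integrableOn_mul_boltzmannFactor (continuous_pow 2) hsq_le hβ).const_mul 2)
    (integrableOn_boltzmannFactor hβ), ← integral_neg]
  refine setIntegral_congr_fun measurableSet_Ioi fun y _ => ?_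
  field_simp [(energy_pos y).ne']

lemma K1_pos {β : ℝ} (hβ : 0 < β) : 0 < K1 β := by
  have : NeZero (volume.restrict (Ioi (0 : ℝ))) := ⟨by simp⟩
  exact integral_exp_pos (integrableOn_boltzmannFactor hβ)

lemma K1_le_K2 {β : ℝ} (hβ : 0 < β) : K1 β ≤ K2 β := by
  refine setIntegral_mono_on (integrableOn_boltzmannFactor hβ)
    (integrableOn_mul_boltzmannFactor continuous_two_mul_sq_add_one_div_energy
      abs_two_mul_sq_add_one_div_energy_le hβ) measurableSet_Ioi fun y _ => ?_
  refine le_mul_of_one_le_left (boltzmannFactor_pos β y).le ?_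
  change 1 ≤ (2 * y ^ 2 + 1) / energy y
  rw [one_le_div (energy_pos y)]
  nlinarith [sq_energy y, energy_pos y]

lemma K2_pos {β : ℝ} (hβ : 0 < β) : 0 < K2 β := (K1_pos hβ).trans_le (K1_le_K2 hβ)

lemma hasDerivAt_etilde {β : ℝ} (hβ : 0 < β) :
    HasDerivAt (fun b => K1 b / K2 b + 3 / b)
      (3 / β * (K1 β / K2 β) + (K1 β / K2 β) ^ 2 - 1 - 3 / β ^ 2) β := by
  refine (((hasDerivAt_K1 hβ).div (hasDerivAt_K2 hβ) (K2_pos hβ).ne').add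
    ((hasDerivAt_inv hβ.ne').const_mul 3)).congr_deriv ?_
  have := (K2_pos hβ).ne'
  field_simp
  ring

lemma riccati_rhs_neg {β r : ℝ} (hβ0 : 0 < β) (hβ1 : β < 1) (hr0 : 0 ≤ r) (hr1 : r ≤ 1) :
    3 / β * r + r ^ 2 - 1 - 3 / β ^ 2 < 0 := by
  have h1 : 3 / β * r ≤ 3 / β := mul_le_of_le_one_right (by positivity) hr1
  have h2 : 3 / β < 3 / β ^ 2 := by
    rw [div_lt_div_iff₀ hβ0 (by positivity)]; nlinarith
  nlinarith

theorem deriv_etilde_neg_on_Ioo (β : ℝ) (hβ : β ∈ Set.Ioo (0:ℝ) 1) :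
    deriv (fun b => K1 b / K2 b + 3 / b) β < 0 := by
  obtain ⟨hβ0, hβ1⟩ := hβ
  rw [(hasDerivAt_etilde hβ0).deriv]
  exact riccati_rhs_neg hβ0 hβ1 (div_nonneg (K1_pos hβ0).le (K2_pos hβ0).le)
    ((div_le_one (K2_pos hβ0)).2 (K1_le_K2 hβ0))
end

section
/- Let β₀ > 0 and J⁰(q) = e^{-β₀√(1+|q|²)}/M(β₀) with M(β₀) = ∫_{ℝ³} e^{-β₀√(1+|q|²)} dq. Then ∫_{ℝ³} |q|² J⁰(q) dq = 12/β₀² + (3/β₀)·K₁(β₀)/K₂(β₀). -/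
/-!
In spherical coordinates the numerator and `M(β₀)` are both radial integrals, so the left side
is `I₄ / I₂` with `Iₙ = ∫₀^∞ yⁿ e^{-β₀√(1+y²)} dy`. Since the derivative of `e^{-β√(1+y²)}` is
`-β y/√(1+y²) · e^{-β√(1+y²)}`, integrating by parts against `g` with `g 0 = 0` gives
`∫ g' e = β ∫ g y/√(1+y²) e`. Taking `g = y√(1+y²)` yields `K₂ = β I₂`, and taking
`g = y³√(1+y²)`, then `g = 3y + 4y³`, yields `β² I₄ = 3 K₁ + 12 I₂`.
-/

open MeasureTheory Real Set

open Filter Topology Asymptotics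

lemma one_le_sqrt_one_add_sq (y : ℝ) : 1 ≤ √(1 + y ^ 2) :=
  Real.one_le_sqrt.2 (by nlinarith)

lemma sqrt_one_add_sq_pos (y : ℝ) : 0 < √(1 + y ^ 2) :=
  one_pos.trans_le (one_le_sqrt_one_add_sq y)

lemma abs_div_sqrt_one_add_sq_le_one (y : ℝ) : |y / √(1 + y ^ 2)| ≤ 1 := by
  rw [abs_div, abs_of_pos (sqrt_one_add_sq_pos y)]
  exact div_le_one_of_le₀ (Real.abs_le_sqrt (by linarith)) (sqrt_one_add_sq_pos y).le

lemma sqrt_one_add_sq_le_two_mul {y : ℝ} (hy : 1 ≤ y) : √(1 + y ^ 2) ≤ 2 * y :=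
  Real.sqrt_le_iff.2 ⟨by linarith, by nlinarith⟩

lemma hasDerivAt_sqrt_one_add_sq (y : ℝ) :
    HasDerivAt (fun y => √(1 + y ^ 2)) (y / √(1 + y ^ 2)) y := by
  refine (((hasDerivAt_pow 2 y).const_add 1).sqrt (by positivity)).congr_deriv ?_
  field_simp
  norm_num

lemma isBigO_pow_atTop_of_abs_le {f : ℝ → ℝ} {n : ℕ} (C : ℝ)
    (h : ∀ y, 1 ≤ y → |f y| ≤ C * y ^ n) : f =O[atTop] (· ^ n) :=
  IsBigO.of_bound C <| by
    filter_upwards [eventually_ge_atTop 1] with y hy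
    rw [Real.norm_eq_abs, Real.norm_eq_abs, abs_of_nonneg (by positivity : 0 ≤ y ^ n)]
    exact h y hy

noncomputable def juttner (β y : ℝ) : ℝ := exp (-β * √(1 + y ^ 2))

section Juttner

variable {β : ℝ}

lemma juttner_pos (y : ℝ) : 0 < juttner β y := exp_pos _

lemma continuous_juttner : Continuous (juttner β) := by
  unfold juttner; fun_prop

lemma hasDerivAt_juttner (y : ℝ) :
    HasDerivAt (juttner β) (-β * (y / √(1 + y ^ 2)) * juttner β y) y := by
  refine (((hasDerivAt_sqrt_one_add_sq y).const_mul (-β)).exp).congr_deriv ?_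
  rw [juttner]; ring

lemma juttner_le_exp (hβ : 0 ≤ β) {y : ℝ} (hy : 0 ≤ y) : juttner β y ≤ exp (-β * y) := by
  have hys : y ≤ √(1 + y ^ 2) := (Real.le_sqrt hy (by positivity)).2 (by linarith)
  exact exp_le_exp.2 (by nlinarith)

lemma isBigO_mul_juttner (hβ : 0 < β) {f : ℝ → ℝ} {n : ℕ} (hf : f =O[atTop] (· ^ n)) :
    (fun y => f y * juttner β y) =O[atTop] fun y => exp (-(β / 2) * y) := by
  have hj : juttner β =O[atTop] fun y => exp (-β * y) :=
    IsBigO.of_bound 1 <| by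
      filter_upwards [eventually_ge_atTop 0] with y hy
      rw [Real.norm_of_nonneg (juttner_pos y).le, Real.norm_of_nonneg (exp_pos _).le, one_mul]
      exact juttner_le_exp hβ.le hy
  have hpow := (isLittleO_pow_exp_pos_mul_atTop n (half_pos hβ)).isBigO
  refine ((hf.trans hpow).mul hj).congr_right fun y => ?_
  rw [← exp_add]; ring_nf

lemma integrableOn_mul_juttner (hβ : 0 < β) {f : ℝ → ℝ} {n : ℕ} (hfc : Continuous f)
    (hf : f =O[atTop] (· ^ n)) : IntegrableOn (fun y => f y * juttner β y) (Ioi 0) :=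
  integrable_of_isBigO_exp_neg (half_pos hβ) (hfc.mul continuous_juttner).continuousOn
    (isBigO_mul_juttner hβ hf)

lemma tendsto_mul_juttner_atTop (hβ : 0 < β) {f : ℝ → ℝ} {n : ℕ} (hf : f =O[atTop] (· ^ n)) :
    Tendsto (fun y => f y * juttner β y) atTop (𝓝 0) :=
  (isBigO_mul_juttner hβ hf).trans_tendsto <|
    tendsto_exp_atBot.comp (tendsto_id.const_mul_atTop_of_neg (by linarith))

theorem integral_deriv_mul_juttner (hβ : 0 < β) {g g' : ℝ → ℝ} {m n : ℕ}
    (hg : ∀ y, HasDerivAt g (g' y) y) (hg'c : Continuous g') (hg0 : g 0 = 0)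
    (hgO : g =O[atTop] (· ^ m)) (hg'O : g' =O[atTop] (· ^ n)) :
    ∫ y in Ioi 0, g' y * juttner β y
      = β * ∫ y in Ioi 0, g y * (y / √(1 + y ^ 2)) * juttner β y := by
  have hgc : Continuous g := continuous_iff_continuousAt.2 fun y => (hg y).continuousAt
  have hq : (fun y => y / √(1 + y ^ 2)) =O[atTop] fun _ => (1 : ℝ) :=
    IsBigO.of_bound 1 <| .of_forall fun y => by
      rw [norm_one, one_mul, Real.norm_eq_abs]
      exact abs_div_sqrt_one_add_sq_le_one y
  have hint₁ := integrableOn_mul_juttner hβ hg'c hg'O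
  have hint₂ := integrableOn_mul_juttner (β := β) (f := fun y => g y * (y / √(1 + y ^ 2))) hβ
    (hgc.mul (continuous_id.div (by fun_prop) fun y => (sqrt_one_add_sq_pos y).ne'))
    ((hgO.mul hq).congr_right fun y => mul_one _)
  have hderiv : ∀ y ∈ Ici (0 : ℝ), HasDerivAt (fun y => g y * juttner β y)
      (g' y * juttner β y - β * (g y * (y / √(1 + y ^ 2)) * juttner β y)) y :=
    fun y _ => ((hg y).mul (hasDerivAt_juttner y)).congr_deriv (by ring)
  have h := integral_Ioi_of_hasDerivAt_of_tendsto' hderiv (hint₁.sub (hint₂.const_mul β))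
    (tendsto_mul_juttner_atTop hβ hgO)
  rw [integral_sub hint₁ (hint₂.const_mul β), integral_const_mul, hg0, zero_mul] at h
  linarith

end Juttner

section Moments

variable {β : ℝ}

lemma integrableOn_pow_mul_juttner (hβ : 0 < β) (n : ℕ) :
    IntegrableOn (fun y => y ^ n * juttner β y) (Ioi 0) :=
  integrableOn_mul_juttner hβ (continuous_pow n) (isBigO_refl _ _)

lemma integral_sq_mul_juttner_pos (hβ : 0 < β) : 0 < ∫ y in Ioi 0, y ^ 2 * juttner β y := by
  have hpos : ∀ y ∈ Ioi (0 : ℝ), 0 < y ^ 2 * juttner β y := fun y hy =>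
    mul_pos (pow_pos hy 2) (juttner_pos y)
  rw [setIntegral_pos_iff_support_of_nonneg_ae
    (ae_restrict_of_forall_mem measurableSet_Ioi fun y hy => (hpos y hy).le)
    (integrableOn_pow_mul_juttner hβ 2),
    inter_eq_self_of_subset_right fun y hy => Function.mem_support.2 (hpos y hy).ne',
    Real.volume_Ioi]
  exact ENNReal.zero_lt_top

lemma K2_eq_mul_integral_sq_mul_juttner (hβ : 0 < β) :
    K2 β = β * ∫ y in Ioi 0, y ^ 2 * juttner β y := by
  have hg : ∀ y, HasDerivAt (fun y => y * √(1 + y ^ 2)) ((2 * y ^ 2 + 1) / √(1 + y ^ 2)) y :=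
    fun y => ((hasDerivAt_id y).mul (hasDerivAt_sqrt_one_add_sq y)).congr_deriv <| by
      have := sqrt_one_add_sq_pos y
      field_simp
      rw [Real.sq_sqrt (by positivity), id]
      ring
  have h := integral_deriv_mul_juttner hβ hg
    (by fun_prop (disch := exact fun y => (sqrt_one_add_sq_pos y).ne')) (by simp)
    (isBigO_pow_atTop_of_abs_le (n := 2) 2 fun y hy => by
      have := sqrt_one_add_sq_le_two_mul hy
      rw [abs_of_nonneg (by positivity)]
      nlinarith)
    (isBigO_pow_atTop_of_abs_le (n := 2) 3 fun y hy => by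
      rw [abs_of_nonneg (by positivity)]
      have := div_le_self (by positivity : (0 : ℝ) ≤ 2 * y ^ 2 + 1) (one_le_sqrt_one_add_sq y)
      nlinarith)
  have hsimp : ∀ y : ℝ, y * √(1 + y ^ 2) * (y / √(1 + y ^ 2)) = y ^ 2 := fun y => by
    have := sqrt_one_add_sq_pos y
    field_simp
  simp only [hsimp] at h
  exact h

lemma integral_mul_juttner_eq_mul_integral_pow_four (hβ : 0 < β) :
    ∫ y in Ioi 0, (3 * y + 4 * y ^ 3) * (y / √(1 + y ^ 2)) * juttner β y
      = β * ∫ y in Ioi 0, y ^ 4 * juttner β y := by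
  have h := integral_deriv_mul_juttner (β := β) (g := fun y => y ^ 3 * √(1 + y ^ 2))
    (g' := fun y => (3 * y + 4 * y ^ 3) * (y / √(1 + y ^ 2))) hβ
    (fun y => ((hasDerivAt_pow 3 y).mul (hasDerivAt_sqrt_one_add_sq y)).congr_deriv <| by
      have := sqrt_one_add_sq_pos y
      field_simp
      rw [Real.sq_sqrt (by positivity)]
      ring)
    (by fun_prop (disch := exact fun y => (sqrt_one_add_sq_pos y).ne')) (by simp)
    (isBigO_pow_atTop_of_abs_le (n := 4) 2 fun y hy => by
      have := sqrt_one_add_sq_le_two_mul hy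
      rw [abs_of_nonneg (by positivity)]
      nlinarith [pow_pos (by linarith : (0 : ℝ) < y) 3])
    (isBigO_pow_atTop_of_abs_le (n := 3) 7 fun y hy => by
      have := abs_div_sqrt_one_add_sq_le_one y
      have := pow_le_pow_right₀ hy (by norm_num : 1 ≤ 3)
      rw [abs_mul, abs_of_nonneg (by positivity)]
      nlinarith)
  have hsimp : ∀ y : ℝ, y ^ 3 * √(1 + y ^ 2) * (y / √(1 + y ^ 2)) = y ^ 4 := fun y => by
    have := sqrt_one_add_sq_pos y
    field_simp
  simpa only [hsimp] using h

lemma integral_mul_juttner_eq_mul_integral_mul_juttner (hβ : 0 < β) :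
    ∫ y in Ioi 0, (3 + 12 * y ^ 2) * juttner β y
      = β * ∫ y in Ioi 0, (3 * y + 4 * y ^ 3) * (y / √(1 + y ^ 2)) * juttner β y :=
  integral_deriv_mul_juttner (g := fun y => 3 * y + 4 * y ^ 3) hβ
    (fun y => (((hasDerivAt_id y).const_mul 3).add ((hasDerivAt_pow 3 y).const_mul 4)).congr_deriv
      (by ring))
    (by fun_prop) (by simp)
    (isBigO_pow_atTop_of_abs_le (n := 3) 7 fun y hy => by
      have := pow_le_pow_right₀ hy (by norm_num : 1 ≤ 3)
      rw [abs_of_nonneg (by positivity)]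
      nlinarith)
    (isBigO_pow_atTop_of_abs_le (n := 2) 15 fun y hy => by
      rw [abs_of_nonneg (by positivity)]
      nlinarith)

lemma integral_mul_juttner_eq_K1_add (hβ : 0 < β) :
    ∫ y in Ioi 0, (3 + 12 * y ^ 2) * juttner β y
      = 3 * K1 β + 12 * ∫ y in Ioi 0, y ^ 2 * juttner β y := by
  have hK1 : IntegrableOn (juttner β) (Ioi 0) := by
    simpa using integrableOn_pow_mul_juttner hβ 0
  simp only [add_mul, mul_assoc]
  rw [integral_add (hK1.const_mul 3) ((integrableOn_pow_mul_juttner hβ 2).const_mul 12),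
    integral_const_mul, integral_const_mul]
  rfl

lemma sq_mul_integral_pow_four_mul_juttner (hβ : 0 < β) :
    β ^ 2 * ∫ y in Ioi 0, y ^ 4 * juttner β y
      = 3 * K1 β + 12 * ∫ y in Ioi 0, y ^ 2 * juttner β y := by
  rw [← integral_mul_juttner_eq_K1_add hβ, integral_mul_juttner_eq_mul_integral_mul_juttner hβ,
    integral_mul_juttner_eq_mul_integral_pow_four hβ]
  ring

end Moments

lemma integral_fun_norm_euclideanSpace (n : ℕ) [NeZero n] (f : ℝ → ℝ) :
    ∫ q : EuclideanSpace ℝ (Fin n), f ‖q‖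
      = n * volume.real (Metric.ball (0 : EuclideanSpace ℝ (Fin n)) 1)
        * ∫ y in Ioi 0, y ^ (n - 1) * f y := by
  rw [integral_fun_norm_addHaar, finrank_euclideanSpace_fin, nsmul_eq_mul, smul_eq_mul]
  simp only [smul_eq_mul, mul_assoc]

theorem integral_normsq_J0 (β₀ : ℝ) (hβ₀ : 0 < β₀) :
    (∫ q : EuclideanSpace ℝ (Fin 3),
        ‖q‖^2 * (Real.exp (-β₀ * Real.sqrt (1 + ‖q‖^2)) / Mfun β₀))
      = 12 / β₀^2 + (3 / β₀) * (K1 β₀ / K2 β₀) := by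
  set c := volume.real (Metric.ball (0 : EuclideanSpace ℝ (Fin 3)) 1)
  have hc : 0 < c :=
    ENNReal.toReal_pos (Metric.measure_ball_pos volume 0 one_pos).ne' measure_ball_lt_top.ne
  have hA := integral_sq_mul_juttner_pos hβ₀
  have hM : Mfun β₀ = 3 * c * ∫ y in Ioi 0, y ^ 2 * juttner β₀ y :=
    integral_fun_norm_euclideanSpace 3 (juttner β₀)
  calc _ = 3 * c * ∫ y in Ioi 0, y ^ 2 * (y ^ 2 * (juttner β₀ y / Mfun β₀)) :=
        integral_fun_norm_euclideanSpace 3 fun r => r ^ 2 * (juttner β₀ r / Mfun β₀)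
    _ = 3 * c * (∫ y in Ioi 0, y ^ 4 * juttner β₀ y) / Mfun β₀ := by
        simp only [← mul_div_assoc, ← mul_assoc, ← pow_add, integral_div]
    _ = 12 / β₀ ^ 2 + (3 / β₀) * (K1 β₀ / K2 β₀) := by
        rw [hM, K2_eq_mul_integral_sq_mul_juttner hβ₀]
        field_simp
        linear_combination sq_mul_integral_pow_four_mul_juttner hβ₀
end
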